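/- arXiv:1109.5533 — 5 statements merged into one kernel-verified Lean document; each statement's English description precedes it below -/
import Mathlib

section
/- Let Φ : ℝ^d → ℝ^n be of class C¹ and 𝓡 its set of regular points (points where the differential is surjective). Let X be the restriction of Φ to 𝓡, a submersion onto Y = Φ(𝓡). Then for a Borel set E ⊆ Y, the Lebesgue measure of E in ℝ^n is zero if and only if the Lebesgue measure of Φ⁻¹(E) ∩ 𝓡 in ℝ^d is zero. -/
/-!
Near a regular point `x₀`, the map `x ↦ (Φ x, P x)`, with `P` a continuous projection onto
`ker DΦ(x₀)`, is by the inverse function theorem a `C¹` diffeomorphism from a neighbourhood of `x₀`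
onto an open subset of `ℝⁿ × ker DΦ(x₀)`, and in this chart `Φ` becomes the first projection.
Differentiable maps between spaces of equal dimension send null sets to null sets, so near `x₀`
the set `Φ⁻¹(E)` is null exactly when `E × ker DΦ(x₀)` is, that is, when `E` is null near
`Φ(x₀)`. Both directions globalise because being null is a local property; `E ⊆ Φ(𝓡)` ensures
that the neighbourhoods of the points `Φ(x₀)` cover `E`.
-/

open MeasureTheory Measure Module Set Filter Topology

theorem addHaar_image_eq_zero_of_differentiableOn_of_finrank_eq
    {X Z : Type*} [NormedAddCommGroup X] [NormedSpace ℝ X] [FiniteDimensional ℝ X]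
    [MeasurableSpace X] [BorelSpace X]
    [NormedAddCommGroup Z] [NormedSpace ℝ Z] [FiniteDimensional ℝ Z]
    [MeasurableSpace Z] [BorelSpace Z]
    (μ : Measure X) (ν : Measure Z) [μ.IsAddHaarMeasure] [ν.IsAddHaarMeasure]
    (hdim : finrank ℝ X = finrank ℝ Z) {f : X → Z} {s : Set X}
    (hf : DifferentiableOn ℝ f s) (hs : μ s = 0) : ν (f '' s) = 0 := by
  let e : Z ≃L[ℝ] X := (LinearEquiv.ofFinrankEq Z X hdim.symm).toContinuousLinearEquiv
  have : (μ.map e.symm).IsAddHaarMeasure := e.symm.isAddHaarMeasure_map μ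
  have hnull : μ ((e ∘ f) '' s) = 0 :=
    addHaar_image_eq_zero_of_differentiableOn_of_addHaar_eq_zero μ
      (e.differentiable.comp_differentiableOn hf) hs
  have he : MeasurableEmbedding e.symm := e.symm.toHomeomorph.measurableEmbedding
  refine absolutelyContinuous_isAddHaarMeasure ν (μ.map e.symm) ?_
  rwa [he.map_apply, ← e.symm.image_symm_eq_preimage, e.symm_symm, ← image_comp]

section SubmersionChart

variable {X Y K : Type*} [NormedAddCommGroup X] [NormedSpace ℝ X]
  [NormedAddCommGroup Y] [NormedSpace ℝ Y] [NormedAddCommGroup K] [NormedSpace ℝ K]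

structure IsSubmersionChart (Φ : X → Y) (h : OpenPartialHomeomorph X (Y × K)) : Prop where
  fst_eq : ∀ x ∈ h.source, (h x).1 = Φ x
  differentiableOn : DifferentiableOn ℝ h h.source
  differentiableOn_symm : DifferentiableOn ℝ h.symm h.target

namespace IsSubmersionChart

variable {Φ : X → Y} {h : OpenPartialHomeomorph X (Y × K)}

theorem surjective_fderiv (hh : IsSubmersionChart Φ h) {x : X} (hx : x ∈ h.source) :
    Function.Surjective (fderiv ℝ Φ x) := by
  have hhx : h x ∈ h.target := h.map_source hx
  have hderiv : HasFDerivAt h (fderiv ℝ h x) (h.symm (h x)) := by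
    rw [h.left_inv hx]
    exact (hh.differentiableOn.differentiableAt (h.open_source.mem_nhds hx)).hasFDerivAt
  have hderiv_symm : HasFDerivAt h.symm (fderiv ℝ h.symm (h x)) (h x) :=
    (hh.differentiableOn_symm.differentiableAt (h.open_target.mem_nhds hhx)).hasFDerivAt
  have hright_inv : fderiv ℝ h x ∘L fderiv ℝ h.symm (h x) = .id ℝ (Y × K) :=
    (hderiv.comp (h x) hderiv_symm).unique
      ((hasFDerivAt_id (h x)).congr_of_eventuallyEq (h.eventually_right_inverse hhx))
  have hΦ : HasFDerivAt Φ (.fst ℝ Y K ∘L fderiv ℝ h x) x := by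
    refine (hasFDerivAt_fst.comp x (h.left_inv hx ▸ hderiv)).congr_of_eventuallyEq ?_
    filter_upwards [h.open_source.mem_nhds hx] with z hz using (hh.fst_eq z hz).symm
  intro y
  refine ⟨fderiv ℝ h.symm (h x) (y, 0), ?_⟩
  rw [hΦ.fderiv]
  simpa using congrArg Prod.fst (DFunLike.congr_fun hright_inv (y, 0))

variable [FiniteDimensional ℝ X] [FiniteDimensional ℝ Y] [FiniteDimensional ℝ K]
  [MeasurableSpace X] [BorelSpace X] [MeasurableSpace Y] [BorelSpace Y]
  [MeasurableSpace K] [BorelSpace K]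
  (μ : Measure X) (ν : Measure Y) [μ.IsAddHaarMeasure] [ν.IsAddHaarMeasure]

theorem measure_preimage_inter_source_eq_zero (hh : IsSubmersionChart Φ h)
    (hdim : finrank ℝ X = finrank ℝ (Y × K)) {E : Set Y} (hE : ν E = 0) :
    μ (Φ ⁻¹' E ∩ h.source) = 0 := by
  have hsub : Φ ⁻¹' E ∩ h.source ⊆ h.symm '' (E ×ˢ univ ∩ h.target) := by
    rintro x ⟨hxE, hx⟩
    exact ⟨h x, ⟨⟨by rw [hh.fst_eq x hx]; exact hxE, trivial⟩, h.map_source hx⟩,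
      h.left_inv hx⟩
  refine measure_mono_null hsub ?_
  refine addHaar_image_eq_zero_of_differentiableOn_of_finrank_eq (ν.prod addHaar) μ hdim.symm
    (hh.differentiableOn_symm.mono inter_subset_right) (measure_mono_null inter_subset_left ?_)
  rw [prod_prod, hE, zero_mul]

theorem exists_mem_nhds_measure_inter_eq_zero (hh : IsSubmersionChart Φ h)
    (hdim : finrank ℝ X = finrank ℝ (Y × K)) {x : X} (hx : x ∈ h.source) {E : Set Y}
    (hE : μ (Φ ⁻¹' E ∩ h.source) = 0) : ∃ W ∈ 𝓝 (Φ x), ν (E ∩ W) = 0 := by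
  have htarget : h.target ∈ 𝓝 (Φ x, (h x).2) := by
    rw [← hh.fst_eq x hx]
    exact h.open_target.mem_nhds (h.map_source hx)
  obtain ⟨W, hW, B, hB, hWB⟩ := mem_nhds_prod_iff.1 htarget
  refine ⟨W, hW, ?_⟩
  have hsub : (E ∩ W) ×ˢ B ⊆ h '' (Φ ⁻¹' E ∩ h.source) := by
    rintro ⟨y, z⟩ ⟨⟨hyE, hyW⟩, hzB⟩
    have hyz : (y, z) ∈ h.target := hWB ⟨hyW, hzB⟩
    refine ⟨h.symm (y, z), ⟨?_, h.map_target hyz⟩, h.right_inv hyz⟩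
    rw [mem_preimage, ← hh.fst_eq _ (h.map_target hyz), h.right_inv hyz]
    exact hyE
  have hnull : (ν.prod (addHaar : Measure K)) ((E ∩ W) ×ˢ B) = 0 :=
    measure_mono_null hsub (addHaar_image_eq_zero_of_differentiableOn_of_finrank_eq μ _ hdim
      (hh.differentiableOn.mono inter_subset_right) hE)
  rw [prod_prod, mul_eq_zero] at hnull
  exact hnull.resolve_right (addHaar.measure_pos_of_mem_nhds hB).ne'

end IsSubmersionChart

end SubmersionChart

section Existence

variable {X Y : Type*} [NormedAddCommGroup X] [NormedSpace ℝ X] [FiniteDimensional ℝ X]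
  [NormedAddCommGroup Y] [NormedSpace ℝ Y] [FiniteDimensional ℝ Y]

theorem finrank_eq_finrank_prod_ker {T : X →L[ℝ] Y} (hT : Function.Surjective T) :
    finrank ℝ X = finrank ℝ (Y × T.ker) := by
  rw [finrank_prod, ← LinearMap.finrank_range_add_finrank_ker (T : X →ₗ[ℝ] Y),
    LinearMap.range_eq_top.2 hT, finrank_top]

theorem exists_isSubmersionChart {Φ : X → Y} {x₀ : X} (hΦ : ContDiffAt ℝ 1 Φ x₀)
    (hx₀ : Function.Surjective (fderiv ℝ Φ x₀)) :
    ∃ h : OpenPartialHomeomorph X (Y × (fderiv ℝ Φ x₀).ker),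
      x₀ ∈ h.source ∧ IsSubmersionChart Φ h := by
  set T := fderiv ℝ Φ x₀
  obtain ⟨P, hP⟩ := Submodule.ClosedComplemented.of_finiteDimensional T.ker
  let e : X ≃L[ℝ] Y × T.ker := T.equivProdOfSurjectiveOfIsCompl P
    (LinearMap.range_eq_top.2 hx₀) (LinearMap.range_eq_of_proj hP) (LinearMap.isCompl_of_proj hP)
  let g : X → Y × T.ker := fun x ↦ (Φ x, P x)
  have hg : ContDiffAt ℝ 1 g x₀ := hΦ.prodMk P.contDiff.contDiffAt
  have hg' : HasFDerivAt g (e : X →L[ℝ] Y × T.ker) x₀ :=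
    (hΦ.differentiableAt one_ne_zero).hasFDerivAt.prodMk P.hasFDerivAt
  obtain ⟨u, hu, hgu⟩ := hg.contDiffOn le_rfl (by simp)
  obtain ⟨v, hv, hsymm⟩ := (hg.to_localInverse hg' one_ne_zero).contDiffOn le_rfl (by simp)
  let h₀ := hg.toOpenPartialHomeomorph g hg' one_ne_zero
  let h := ((h₀.restrOpen (interior u) isOpen_interior).symm.restrOpen (interior v)
    isOpen_interior).symm
  have hsource : h.source = h₀.source ∩ interior u ∩ h₀ ⁻¹' interior v := by
    simp [h]
  have htarget : h.target ⊆ interior v := by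
    simp [h]
  refine ⟨h, ?_, ⟨fun x _ ↦ rfl, ?_, ?_⟩⟩
  · rw [hsource]
    exact ⟨⟨hg.mem_toOpenPartialHomeomorph_source hg' one_ne_zero,
      mem_interior_iff_mem_nhds.2 hu⟩, mem_interior_iff_mem_nhds.2 hv⟩
  · exact (hgu.differentiableOn one_ne_zero).mono fun x hx ↦ interior_subset (hsource ▸ hx).1.2
  · exact (hsymm.differentiableOn one_ne_zero).mono (htarget.trans interior_subset)

end Existence

theorem stmt_4_general
    (n d : ℕ)
    (Φ : EuclideanSpace ℝ (Fin d) → EuclideanSpace ℝ (Fin n))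
    (hΦ : ContDiff ℝ 1 Φ)
    (R : Set (EuclideanSpace ℝ (Fin d)))
    (hR : R = {x | Function.Surjective (fderiv ℝ Φ x)})
    (E : Set (EuclideanSpace ℝ (Fin n)))
    (hEY : E ⊆ Φ '' R) :
    volume E = 0 ↔ volume (Φ ⁻¹' E ∩ R) = 0 := by
  subst hR
  constructor
  · intro hE
    refine measure_null_of_locally_null _ fun x hx ↦ ?_
    obtain ⟨h, hxh, hh⟩ := exists_isSubmersionChart hΦ.contDiffAt hx.2
    exact ⟨_, inter_mem_nhdsWithin _ (h.open_source.mem_nhds hxh),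
      measure_mono_null (inter_subset_inter_left _ inter_subset_left)
        (hh.measure_preimage_inter_source_eq_zero volume volume
          (finrank_eq_finrank_prod_ker hx.2) hE)⟩
  · intro hE
    refine measure_null_of_locally_null _ fun y hy ↦ ?_
    obtain ⟨x, hx, rfl⟩ := hEY hy
    obtain ⟨h, hxh, hh⟩ := exists_isSubmersionChart hΦ.contDiffAt hx
    obtain ⟨W, hW, hEW⟩ := hh.exists_mem_nhds_measure_inter_eq_zero volume volume
      (finrank_eq_finrank_prod_ker hx) hxh
      (measure_mono_null (inter_subset_inter_right _ fun z hz ↦ hh.surjective_fderiv hz) hE)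
    exact ⟨E ∩ W, inter_mem_nhdsWithin _ hW, hEW⟩

/-- Let `Φ : ℝᵈ → ℝⁿ` be C¹ and `𝓡` its (open) set of regular points,
so that `Φ` restricted to `𝓡` is a submersion onto `Y = Φ(𝓡)`. Then a Borel set `E ⊆ Y`
is Lebesgue negligible in `ℝⁿ` if and only if `Φ⁻¹(E) ∩ 𝓡` is Lebesgue negligible in `ℝᵈ`. -/
theorem stmt_4
    (n d : ℕ)
    (Φ : EuclideanSpace ℝ (Fin d) → EuclideanSpace ℝ (Fin n))
    (hΦ : ContDiff ℝ 1 Φ)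
    (R : Set (EuclideanSpace ℝ (Fin d)))
    (hR : R = {x | Function.Surjective (fderiv ℝ Φ x)})
    (E : Set (EuclideanSpace ℝ (Fin n)))
    (hE : MeasurableSet E) (hEY : E ⊆ Φ '' R) :
    volume E = 0 ↔ volume (Φ ⁻¹' E ∩ R) = 0 :=
  stmt_4_general n d Φ hΦ R hR E hEY
end

section
/- In the setting of the mock metaplectic representation with Φ : X → Y a submersion and fiber measures ν_y from the coarea disintegration, fix y ∈ Y and h ∈ H. Then the map T_{y,h} : L²(X,ν_y) → L²(X,ν_{h[y]}) defined by (T_{y,h} f)(x) = √(α(h⁻¹)β(h⁻¹)) f(h⁻¹.x) is a unitary operator, and satisfies the cocycle identities T_{h[y],h'} ∘ T_{y,h} = T_{y,h'h} and T_{y,h}⁻¹ = T_{h[y],h⁻¹} for all h, h' ∈ H and y ∈Y. -/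
open MeasureTheory
open scoped ENNReal

/-!
The operators `T_{y,h}` do not depend on `y`: they are the operators `(T_h f)(x) = w(h) f(h⁻¹ • x)`
of the left-regular representation twisted by the character `w(h) = √(α(h⁻¹) β(h⁻¹))`, so the
cocycle identities are just `T_{h'} ∘ T_h = T_{h'h}` and `T_1 = id`. For the isometry, the change of
variables `x ↦ h⁻¹ • x` turns `ν_{h[y]}` into `α(h)β(h) ν_y` by covariance, and this factor is
cancelled exactly by `|w(h)|² = (α(h)β(h))⁻¹`.
-/

section Character

variable {G : Type*} [Group G]

def MonoidHom.ofMapMulOfPos (χ : G → ℝ) (hχ_pos : ∀ g, 0 < χ g)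
    (hχ_mul : ∀ a b, χ (a * b) = χ a * χ b) : G →* ℝ where
  toFun := χ
  map_one' := (mul_left_cancel₀ (hχ_pos 1).ne' (by rw [mul_one, ← hχ_mul, one_mul])).symm
  map_mul' := hχ_mul

noncomputable def sqrtInvChar (χ : G →* ℝ) (hχ : ∀ g, 0 ≤ χ g) : G →* ℝ where
  toFun g := √(χ g⁻¹)
  map_one' := by simp
  map_mul' a b := by rw [mul_inv_rev, map_mul, Real.sqrt_mul (hχ _), mul_comm]

theorem sqrtInvChar_sq_mul (χ : G →* ℝ) (hχ : ∀ g, 0 ≤ χ g) (g : G) :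
    sqrtInvChar χ hχ g ^ 2 * χ g = 1 := by
  rw [sqrtInvChar, MonoidHom.coe_mk, OneHom.coe_mk, Real.sq_sqrt (hχ _), ← map_mul,
    inv_mul_cancel, map_one]

end Character

section TwistedTranslate

variable {G X : Type*} [Group G] [MulAction G X]

def twistedTranslate (w : G → ℂ) (g : G) (f : X → ℂ) : X → ℂ := fun x => w g * f (g⁻¹ • x)

theorem twistedTranslate_twistedTranslate (w : G →* ℂ) (g g' : G) (f : X → ℂ) :
    twistedTranslate w g' (twistedTranslate w g f) = twistedTranslate w (g' * g) f := by
  funext x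
  simp only [twistedTranslate, mul_inv_rev, mul_smul, map_mul]
  ring

theorem twistedTranslate_one (w : G →* ℂ) (f : X → ℂ) : twistedTranslate w 1 f = f := by
  funext x
  simp [twistedTranslate]

theorem twistedTranslate_inv_twistedTranslate (w : G →* ℂ) (g : G) (f : X → ℂ) :
    twistedTranslate w g⁻¹ (twistedTranslate w g f) = f := by
  rw [twistedTranslate_twistedTranslate, inv_mul_cancel, twistedTranslate_one]

theorem twistedTranslate_twistedTranslate_inv (w : G →* ℂ) (g : G) (f : X → ℂ) :
    twistedTranslate w g (twistedTranslate w g⁻¹ f) = f := by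
  simpa using twistedTranslate_inv_twistedTranslate w g⁻¹ f

theorem lintegral_nnnorm_twistedTranslate_sq [MeasurableSpace X] [MeasurableConstSMul G X]
    {μ ν : Measure X} {w : G → ℂ} {g : G} {k : ℝ}
    (hmap : μ.map (g⁻¹ • ·) = ENNReal.ofReal k • ν) (hwk : ‖w g‖ ^ 2 * k = 1) (f : X → ℂ) :
    ∫⁻ x, ‖twistedTranslate w g f x‖₊ ^ 2 ∂μ = ∫⁻ x, ‖f x‖₊ ^ 2 ∂ν := by
  calc ∫⁻ x, ‖twistedTranslate w g f x‖₊ ^ 2 ∂μ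
      = ∫⁻ x, ENNReal.ofReal (‖w g‖ ^ 2) * ‖f (g⁻¹ • x)‖₊ ^ 2 ∂μ := by
        simp only [twistedTranslate, nnnorm_mul, ENNReal.coe_mul, mul_pow,
          ENNReal.ofReal_pow (norm_nonneg _), ofReal_norm, enorm]
    _ = ENNReal.ofReal (‖w g‖ ^ 2) * ∫⁻ x, ‖f x‖₊ ^ 2 ∂(μ.map (g⁻¹ • ·)) := by
        rw [lintegral_const_mul' _ _ ENNReal.ofReal_ne_top]
        exact congrArg _ (lintegral_map_equiv (fun x => (‖f x‖₊ : ℝ≥0∞) ^ 2)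
          (MeasurableEquiv.smul g⁻¹)).symm
    _ = ∫⁻ x, ‖f x‖₊ ^ 2 ∂ν := by
        rw [hmap, lintegral_smul_measure, smul_eq_mul, ← mul_assoc,
          ← ENNReal.ofReal_mul (by positivity), hwk, ENNReal.ofReal_one, one_mul]

end TwistedTranslate

/-- With the fiber measures `ν_y` satisfying the covariance
`ν_{h[y]}^h = α(h)β(h) ν_y`, for fixed `y` and `h` the map
`(T_{y,h} f)(x) = √(α(h⁻¹)β(h⁻¹)) f(h⁻¹.x)` is a unitary operator
`L²(X,ν_y) → L²(X,ν_{h[y]})` and the cocycle identities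
`T_{h[y],h'} ∘ T_{y,h} = T_{y,h'h}` and `T_{y,h}⁻¹ = T_{h[y],h⁻¹}` hold. -/
theorem stmt_10
    (n d : ℕ) (H : Type*) [Group H]
    -- linear action of `H` on `ℝⁿ`
    (ρ : H →* (EuclideanSpace ℝ (Fin n) ≃L[ℝ] EuclideanSpace ℝ (Fin n)))
    -- action of `H` on `ℝᵈ`
    (σ : H → EuclideanSpace ℝ (Fin d) → EuclideanSpace ℝ (Fin d))
    (hσ_one : ∀ x, σ 1 x = x)
    (hσ_mul : ∀ h₁ h₂ x, σ (h₁ * h₂) x = σ h₁ (σ h₂ x))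
    (hσ_cont : ∀ h, Continuous (σ h))
    -- the characters `α`, `β`
    (α β : H → ℝ)
    (hα_pos : ∀ h, 0 < α h) (hβ_pos : ∀ h, 0 < β h)
    (hα_mul : ∀ h₁ h₂, α (h₁ * h₂) = α h₁ * α h₂)
    (hβ_mul : ∀ h₁ h₂, β (h₁ * h₂) = β h₁ * β h₂)
    -- the fiber measures and their covariance `ν_{h[y]}^h = α(h)β(h)ν_y`
    (ν : EuclideanSpace ℝ (Fin n) → Measure (EuclideanSpace ℝ (Fin d)))
    (hcov : ∀ (h : H) (y : EuclideanSpace ℝ (Fin n)),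
      Measure.map (σ h⁻¹) (ν (ρ h y)) = ENNReal.ofReal (α h * β h) • ν y)
    -- the operators `T_{y,h}`
    (T : EuclideanSpace ℝ (Fin n) → H → (EuclideanSpace ℝ (Fin d) → ℂ) →
      (EuclideanSpace ℝ (Fin d) → ℂ))
    (hT : ∀ y h f x, T y h f x = (Real.sqrt (α h⁻¹ * β h⁻¹) : ℂ) * f (σ h⁻¹ x)) :
    -- `T_{y,h}` is isometric from `L²(X,ν_y)` to `L²(X,ν_{h[y]})`
    (∀ (y : EuclideanSpace ℝ (Fin n)) (h : H) (f : EuclideanSpace ℝ (Fin d) → ℂ),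
      ∫⁻ x, ‖T y h f x‖₊ ^ 2 ∂(ν (ρ h y)) = ∫⁻ x, ‖f x‖₊ ^ 2 ∂(ν y)) ∧
    -- the cocycle identity `T_{h[y],h'} ∘ T_{y,h} = T_{y,h'h}`
    (∀ (y : EuclideanSpace ℝ (Fin n)) (h h' : H) (f : EuclideanSpace ℝ (Fin d) → ℂ) (x),
      T (ρ h y) h' (T y h f) x = T y (h' * h) f x) ∧
    -- `T_{y,h}⁻¹ = T_{h[y],h⁻¹}` (two-sided inverse, so `T_{y,h}` is surjective, hence unitary)
    (∀ (y : EuclideanSpace ℝ (Fin n)) (h : H) (f : EuclideanSpace ℝ (Fin d) → ℂ) (x),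
      T (ρ h y) h⁻¹ (T y h f) x = f x ∧ T y h (T (ρ h y) h⁻¹ f) x = f x) := by
  let _ : MulAction H (EuclideanSpace ℝ (Fin d)) :=
    { smul := σ, one_smul := hσ_one, mul_smul := hσ_mul }
  have : MeasurableConstSMul H (EuclideanSpace ℝ (Fin d)) :=
    ⟨fun h => (hσ_cont h).measurable⟩
  let χ : H →* ℝ :=
    MonoidHom.ofMapMulOfPos α hα_pos hα_mul * MonoidHom.ofMapMulOfPos β hβ_pos hβ_mul
  have hχ : ∀ h, 0 ≤ χ h := fun h => (mul_pos (hα_pos h) (hβ_pos h)).le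
  let w : H →* ℂ := (Complex.ofRealHom : ℝ →* ℂ).comp (sqrtInvChar χ hχ)
  have hTw : ∀ y h, T y h = twistedTranslate w h := fun y h => funext fun f => funext (hT y h f)
  refine ⟨fun y h f => ?_, fun y h h' f x => ?_, fun y h f x => ⟨?_, ?_⟩⟩
  · have hwk : ‖w h‖ ^ 2 * (α h * β h) = 1 := by
      change ‖((sqrtInvChar χ hχ h : ℝ) : ℂ)‖ ^ 2 * χ h = 1
      rw [Complex.norm_real, Real.norm_eq_abs, sq_abs]
      exact sqrtInvChar_sq_mul χ hχ h
    rw [hTw]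
    exact lintegral_nnnorm_twistedTranslate_sq (hcov h y) hwk f
  · rw [hTw, hTw, hTw, twistedTranslate_twistedTranslate]
  · rw [hTw, hTw, twistedTranslate_inv_twistedTranslate]
  · rw [hTw, hTw, twistedTranslate_twistedTranslate_inv]
end

section
/- Let n ≤ d, suppose the H-action on ℝ^d is linear and Φ : ℝ^d → ℝ^n is homogeneous of degree p > 0 (so Φ(δx) = δ^p Φ(x)), and suppose η is an admissible vector for the mock metaplectic representation U of G = ℝ^n ⋊ H. Then for every δ > 0 the dilated vector √(δ^{np−d}) η^δ, where η^δ(x) = η(δ⁻¹x), is also admissible for U. -/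
open MeasureTheory Real
open scoped ENNReal

/-- `η` is an admissible vector for the mock metaplectic representation
`(U_{(a,h)} f)(x) = β(h)^{-1/2} e^{-2πi⟨Φ(x),a⟩} f(h⁻¹.x)` of `G = ℝⁿ ⋊ H` on `L²(ℝᵈ)`,
where `G` carries the left Haar measure `dg = α(h)⁻¹ da dμH(h)`:
`∫_G |⟨f, U_g η⟩|² dg = ‖f‖²` for every `f ∈ L²(ℝᵈ)`. -/
def IsAdmissible (n d : ℕ) {H : Type*} [Group H] [MeasurableSpace H] (μH : Measure H)
    (α β : H → ℝ)
    (σ : H → EuclideanSpace ℝ (Fin d) → EuclideanSpace ℝ (Fin d))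
    (Φ : EuclideanSpace ℝ (Fin d) → EuclideanSpace ℝ (Fin n))
    (η : EuclideanSpace ℝ (Fin d) → ℂ) : Prop :=
  MemLp η 2 volume ∧
  ∀ f : EuclideanSpace ℝ (Fin d) → ℂ, MemLp f 2 volume →
    (∫⁻ h, (∫⁻ a, ‖(∫ x, f x * (starRingEnd ℂ)
        ((Real.sqrt (β h) : ℂ)⁻¹ *
          Complex.exp (-(2 * π * Complex.I) * ((inner ℝ (Φ x) a : ℝ) : ℂ)) *
          η (σ h⁻¹ x)) ∂volume)‖₊ ^ 2
        ∂(volume : Measure (EuclideanSpace ℝ (Fin n)))) * ENNReal.ofReal (α h)⁻¹ ∂μH)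
      = ∫⁻ x, ‖f x‖₊ ^ 2 ∂volume

/-! Substituting `x = δ • y` in the coefficient `⟨f, U_{(a,h)} η_δ⟩` of the dilated vector, the
linearity of the `H`-action and the homogeneity of `Φ` turn it into
`√(δ^{np-d}) δ^d ⟨f(δ·), U_{(δ^p a,h)} η⟩`. Substituting `b = δ^p • a` in the `a`-integral
contributes `δ^{-np}`, so the squared coefficients integrate to `δ^d` times those of `f(δ·)`
against `η`, and admissibility of `η` gives `δ^d ‖f(δ·)‖² = ‖f‖²`. -/

namespace MeasureTheory.Measure

variable {E : Type*} [NormedAddCommGroup E] [NormedSpace ℝ E] [MeasurableSpace E] [BorelSpace E]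
  [FiniteDimensional ℝ E] (μ : Measure E) [μ.IsAddHaarMeasure]

theorem lintegral_comp_smul (g : E → ℝ≥0∞) {r : ℝ} (hr : r ≠ 0) :
    ∫⁻ x, g (r • x) ∂μ = ENNReal.ofReal |(r ^ Module.finrank ℝ E)⁻¹| * ∫⁻ x, g x ∂μ := by
  rw [← smul_eq_mul, ← lintegral_smul_measure, ← map_addHaar_smul μ hr]
  exact (lintegral_map_equiv g (Homeomorph.smulOfNeZero r hr).toMeasurableEquiv).symm

theorem integral_eq_pow_smul_integral_comp_smul {F : Type*} [NormedAddCommGroup F]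
    [NormedSpace ℝ F] (g : E → F) {r : ℝ} (hr : 0 < r) :
    ∫ x, g x ∂μ = r ^ Module.finrank ℝ E • ∫ x, g (r • x) ∂μ := by
  rw [integral_comp_smul_of_nonneg μ g r (hR := hr.le), smul_inv_smul₀ (pow_ne_zero _ hr.ne')]

theorem memLp_comp_smul {F : Type*} [NormedAddCommGroup F] {g : E → F} {q : ℝ≥0∞}
    (hg : MemLp g q μ) {r : ℝ} (hr : r ≠ 0) : MemLp (fun x => g (r • x)) q μ := by
  have : MemLp g q (map (r • · : E → E) μ) := by
    rw [map_addHaar_smul μ hr]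
    exact hg.smul_measure ENNReal.ofReal_ne_top
  exact (Homeomorph.smulOfNeZero r hr).toMeasurableEquiv.memLp_map_measure_iff.1 this

end MeasureTheory.Measure

section MockMetaplectic

variable {n d : ℕ} {H : Type*} [Group H] (β : H → ℝ)
  (σ : H → EuclideanSpace ℝ (Fin d) → EuclideanSpace ℝ (Fin d))
  (Φ : EuclideanSpace ℝ (Fin d) → EuclideanSpace ℝ (Fin n))

/-- The coefficient `⟨f, U_{(a,h)} η⟩` of the mock metaplectic representation. -/
noncomputable def mockMetaplecticCoeff (η f : EuclideanSpace ℝ (Fin d) → ℂ) (h : H)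
    (a : EuclideanSpace ℝ (Fin n)) : ℂ :=
  ∫ x, f x * (starRingEnd ℂ) ((Real.sqrt (β h) : ℂ)⁻¹ *
    Complex.exp (-(2 * π * Complex.I) * ((inner ℝ (Φ x) a : ℝ) : ℂ)) * η (σ h⁻¹ x))

theorem isAdmissible_iff [MeasurableSpace H] (μH : Measure H) (α : H → ℝ)
    (η : EuclideanSpace ℝ (Fin d) → ℂ) :
    IsAdmissible n d μH α β σ Φ η ↔ MemLp η 2 volume ∧
      ∀ f : EuclideanSpace ℝ (Fin d) → ℂ, MemLp f 2 volume →
        ∫⁻ h, (∫⁻ a, ‖mockMetaplecticCoeff β σ Φ η f h a‖₊ ^ 2) * ENNReal.ofReal (α h)⁻¹ ∂μH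
          = ∫⁻ x, ‖f x‖₊ ^ 2 :=
  Iff.rfl

variable {β σ Φ}

theorem mockMetaplecticCoeff_dilate {δ p : ℝ} (hδ : 0 < δ)
    (hσ : ∀ h x, σ h (δ • x) = δ • σ h x) (hΦ : ∀ x, Φ (δ • x) = δ ^ p • Φ x) (c : ℝ)
    (η f : EuclideanSpace ℝ (Fin d) → ℂ) (h : H) (a : EuclideanSpace ℝ (Fin n)) :
    mockMetaplecticCoeff β σ Φ (fun x => (c : ℂ) * η (δ⁻¹ • x)) f h a
      = ((c * δ ^ d : ℝ) : ℂ) *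
          mockMetaplecticCoeff β σ Φ η (fun y => f (δ • y)) h (δ ^ p • a) := by
  have hpoint : ∀ y, f (δ • y) * (starRingEnd ℂ) ((Real.sqrt (β h) : ℂ)⁻¹ *
        Complex.exp (-(2 * π * Complex.I) * ((inner ℝ (Φ (δ • y)) a : ℝ) : ℂ)) *
        ((c : ℂ) * η (δ⁻¹ • σ h⁻¹ (δ • y))))
      = c * (f (δ • y) * (starRingEnd ℂ) ((Real.sqrt (β h) : ℂ)⁻¹ *
        Complex.exp (-(2 * π * Complex.I) * ((inner ℝ (Φ y) (δ ^ p • a) : ℝ) : ℂ)) *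
        η (σ h⁻¹ y))) := by
    intro y
    rw [hΦ, hσ, inv_smul_smul₀ hδ.ne', real_inner_smul_left, ← real_inner_smul_right]
    simp only [map_mul, Complex.conj_ofReal]
    ring
  unfold mockMetaplecticCoeff
  rw [Measure.integral_eq_pow_smul_integral_comp_smul volume _ hδ, finrank_euclideanSpace_fin]
  simp only [hpoint, integral_const_mul, Complex.real_smul]
  push_cast
  ring

theorem dilation_normalization {δ : ℝ} (hδ : 0 < δ) (p : ℝ) :
    (√(δ ^ ((n : ℝ) * p - d)) * δ ^ d) ^ 2 * |((δ ^ p) ^ n)⁻¹| = δ ^ d := by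
  have hpow : (δ ^ p) ^ n = δ ^ ((n : ℝ) * p) := by
    rw [← rpow_natCast, ← rpow_mul hδ.le, mul_comm]
  rw [mul_pow, sq_sqrt (by positivity), rpow_sub hδ, rpow_natCast, hpow,
    abs_of_pos (by positivity)]
  field_simp

theorem lintegral_mockMetaplecticCoeff_dilate {δ p : ℝ} (hδ : 0 < δ)
    (hσ : ∀ h x, σ h (δ • x) = δ • σ h x) (hΦ : ∀ x, Φ (δ • x) = δ ^ p • Φ x)
    (η f : EuclideanSpace ℝ (Fin d) → ℂ) (h : H) :
    ∫⁻ a, ‖mockMetaplecticCoeff β σ Φ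
        (fun x => (√(δ ^ ((n : ℝ) * p - d)) : ℂ) * η (δ⁻¹ • x)) f h a‖₊ ^ 2
      = ENNReal.ofReal (δ ^ d) *
          ∫⁻ b, ‖mockMetaplecticCoeff β σ Φ η (fun y => f (δ • y)) h b‖₊ ^ 2 := by
  have hsq : ∀ r : ℝ, (‖r‖₊ : ℝ≥0∞) ^ 2 = ENNReal.ofReal (r ^ 2) := fun r => by
    rw [← enorm_eq_nnnorm, Real.enorm_eq_ofReal_abs, ← ENNReal.ofReal_pow (abs_nonneg _), sq_abs]
  simp_rw [mockMetaplecticCoeff_dilate hδ hσ hΦ, nnnorm_mul, Complex.nnnorm_real,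
    ENNReal.coe_mul, mul_pow]
  rw [lintegral_const_mul' _ _ (by rw [hsq]; exact ENNReal.ofReal_ne_top),
    Measure.lintegral_comp_smul volume
      (fun b => (‖mockMetaplecticCoeff β σ Φ η (fun y => f (δ • y)) h b‖₊ : ℝ≥0∞) ^ 2)
      (rpow_pos_of_pos hδ p).ne',
    finrank_euclideanSpace_fin, ← mul_assoc, hsq, ← ENNReal.ofReal_mul (by positivity),
    dilation_normalization hδ]

end MockMetaplectic

theorem IsAdmissible.dilate {n d : ℕ} {H : Type*} [Group H] [MeasurableSpace H] {μH : Measure H}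
    {α β : H → ℝ} {σ : H → EuclideanSpace ℝ (Fin d) → EuclideanSpace ℝ (Fin d)}
    {Φ : EuclideanSpace ℝ (Fin d) → EuclideanSpace ℝ (Fin n)} {η : EuclideanSpace ℝ (Fin d) → ℂ}
    (hη : IsAdmissible n d μH α β σ Φ η) {δ p : ℝ} (hδ : 0 < δ)
    (hσ : ∀ h x, σ h (δ • x) = δ • σ h x) (hΦ : ∀ x, Φ (δ • x) = δ ^ p • Φ x) :
    IsAdmissible n d μH α β σ Φ (fun x => (√(δ ^ ((n : ℝ) * p - d)) : ℂ) * η (δ⁻¹ • x)) := by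
  rw [isAdmissible_iff] at hη ⊢
  refine ⟨(Measure.memLp_comp_smul volume hη.1 (inv_ne_zero hδ.ne')).const_mul _, fun f hf => ?_⟩
  have hJac : ENNReal.ofReal (δ ^ d) * ENNReal.ofReal |(δ ^ d)⁻¹| = 1 := by
    rw [← ENNReal.ofReal_mul (by positivity), abs_of_pos (by positivity),
      mul_inv_cancel₀ (by positivity), ENNReal.ofReal_one]
  simp_rw [lintegral_mockMetaplecticCoeff_dilate hδ hσ hΦ, mul_assoc]
  rw [lintegral_const_mul' _ _ ENNReal.ofReal_ne_top,
    hη.2 _ (Measure.memLp_comp_smul volume hf hδ.ne'),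
    Measure.lintegral_comp_smul volume (fun x => (‖f x‖₊ : ℝ≥0∞) ^ 2) hδ.ne',
    finrank_euclideanSpace_fin, ← mul_assoc, hJac, one_mul]

theorem stmt_11_general
    (n d : ℕ) (H : Type*) [Group H] [MeasurableSpace H]
    (μH : Measure H)
    (α : H → ℝ)
    -- the `H`-action on `ℝᵈ` is linear
    (σ : H →* (EuclideanSpace ℝ (Fin d) ≃L[ℝ] EuclideanSpace ℝ (Fin d)))
    (β : H → ℝ)
    (Φ : EuclideanSpace ℝ (Fin d) → EuclideanSpace ℝ (Fin n))
    -- `Φ` is homogeneous of degree `p > 0`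
    (p : ℝ)
    (hhom : ∀ δ : ℝ, 0 < δ → ∀ x, Φ (δ • x) = (δ ^ p) • Φ x)
    -- `η` is admissible
    (η : EuclideanSpace ℝ (Fin d) → ℂ)
    (hη : IsAdmissible n d μH α β (fun h x => σ h x) Φ η) :
    ∀ δ : ℝ, 0 < δ →
      IsAdmissible n d μH α β (fun h x => σ h x) Φ
        (fun x => (Real.sqrt (δ ^ ((n : ℝ) * p - d)) : ℂ) * η (δ⁻¹ • x)) :=
  fun δ hδ => hη.dilate hδ (fun h => map_smul (σ h) δ) (hhom δ hδ)

/-- If the `H`-action on `ℝᵈ` is linear, `Φ` is homogeneous of degree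
`p > 0`, and `η` is an admissible vector for the mock metaplectic representation, then for
every `δ > 0` the dilated vector `√(δ^{np-d}) η^δ`, with `η^δ(x) = η(δ⁻¹x)`, is admissible. -/
theorem stmt_11
    (n d : ℕ) (hnd : n ≤ d) (H : Type*) [Group H] [MeasurableSpace H] [MeasurableMul H]
    (μH : Measure H) [SigmaFinite μH] [μH.IsMulLeftInvariant]
    (ρ : H →* (EuclideanSpace ℝ (Fin n) ≃L[ℝ] EuclideanSpace ℝ (Fin n)))
    (α : H → ℝ) (hα_meas : Measurable α)
    (hα : ∀ h, α h = |LinearMap.det ((ρ h⁻¹).toLinearEquiv.toLinearMap)|)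
    -- the `H`-action on `ℝᵈ` is linear
    (σ : H →* (EuclideanSpace ℝ (Fin d) ≃L[ℝ] EuclideanSpace ℝ (Fin d)))
    (hσ_meas : Measurable fun p : H × EuclideanSpace ℝ (Fin d) => σ p.1 p.2)
    (β : H → ℝ) (hβ_pos : ∀ h, 0 < β h) (hβ_meas : Measurable β)
    (hβ : ∀ (h : H) (E : Set (EuclideanSpace ℝ (Fin d))), MeasurableSet E →
      volume ((σ h⁻¹) ⁻¹' E) = ENNReal.ofReal (β h) * volume E)
    (Φ : EuclideanSpace ℝ (Fin d) → EuclideanSpace ℝ (Fin n))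
    (hΦ : ContDiff ℝ 1 Φ)
    (hint : ∀ h x, Φ (σ h x) = ρ h (Φ x))
    -- `Φ` is homogeneous of degree `p > 0`
    (p : ℝ) (hp : 0 < p)
    (hhom : ∀ δ : ℝ, 0 < δ → ∀ x, Φ (δ • x) = (δ ^ p) • Φ x)
    -- `η` is admissible
    (η : EuclideanSpace ℝ (Fin d) → ℂ)
    (hη : IsAdmissible n d μH α β (fun h x => σ h x) Φ η) :
    ∀ δ : ℝ, 0 < δ →
      IsAdmissible n d μH α β (fun h x => σ h x) Φ
        (fun x => (Real.sqrt (δ ^ ((n : ℝ) * p - d)) : ℂ) * η (δ⁻¹ • x)) :=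
  stmt_11_general n d H μH α σ β Φ p hhom η hη
end

section
/- Let the shearlet group H consist of all 2×2 matrices S_ℓ A_t with S_ℓ = [[1,0],[−ℓ,1]] and A_t = [[t^{-1/2},0],[0,t^{1/2−γ}]] for ℓ ∈ ℝ, t > 0 and fixed γ > 0, acting on ℝ² by matrix multiplication. Then the map Φ : ℝ² → ℝ², Φ(x₁,x₂) = −½(x₁², x₁x₂), satisfies Φ(h x) = h[Φ(x)] for all h ∈ H, where h[σ] is the action induced by σ ↦ ᵗh⁻¹ σ h⁻¹ on the space Σ of symmetric matrices [[a₁, a₂/2],[a₂/2, 0]] identified with ℝ² via (a₁,a₂); moreover JΦ(x₁,x₂) = x₁²/2, α(ℓ,t) = t^{1+γ}, and β(ℓ,t) = t^{-γ}. -/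
open Real Matrix

private lemma tr2 (a b c d : ℝ) : (!![a, b; c, d])ᵀ = !![a, c; b, d] := by
  ext i j; fin_cases i <;> fin_cases j <;> rfl

/-- **the shearlet group.** Let `h = S_ℓ A_t` with
`S_ℓ = [[1,0],[-ℓ,1]]`, `A_t = [[t^{-1/2},0],[0,t^{1/2-γ}]]` act on `ℝ²` by matrix
multiplication. The map `Φ(x₁,x₂) = -½(x₁², x₁x₂)` satisfies `Φ(hx) = h[Φ(x)]`, where
`h[·]` is the action on `Σ ≅ ℝ²` (symmetric matrices `[[a₁,a₂/2],[a₂/2,0]]`) induced by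
`σ ↦ ᵗh⁻¹ σ h⁻¹`: in coordinates `σ ↦ ᵗh⁻¹σh⁻¹` reads `a ↦ [[t, t^γℓ],[0,t^γ]] a` and
`h[·]` is its contragredient, given by the matrix `B`. Moreover `JΦ(x) = x₁²/2`,
`α(ℓ,t) = t^{1+γ}` and `β(ℓ,t) = t^{-γ}`. -/
theorem stmt_15 (γ : ℝ) (hγ : 0 < γ) (ℓ t : ℝ) (ht : 0 < t)
    (Φ : (Fin 2 → ℝ) → (Fin 2 → ℝ))
    (hΦ : ∀ v, Φ v = ![-(1/2 : ℝ) * (v 0) ^ 2, -(1/2 : ℝ) * (v 0 * v 1)])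
    (M B : Matrix (Fin 2) (Fin 2) ℝ)
    -- `M = S_ℓ A_t`
    (hM : M = !![(1 : ℝ), 0; -ℓ, 1] * !![t ^ (-(1 : ℝ)/2), 0; 0, t ^ ((1 : ℝ)/2 - γ)])
    (hB : B = !![t⁻¹, 0; -ℓ * t⁻¹, t ^ (-γ)]) :
    -- in `Σ`-coordinates, `σ ↦ ᵗh⁻¹ σ h⁻¹` is `a ↦ [[t, t^γ ℓ],[0, t^γ]] a` …
    (∀ a₁ a₂ : ℝ, (M⁻¹)ᵀ * !![a₁, a₂ / 2; a₂ / 2, 0] * M⁻¹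
      = !![t * a₁ + t ^ γ * ℓ * a₂, t ^ γ * a₂ / 2; t ^ γ * a₂ / 2, 0]) ∧
    -- … and `B` is the matrix of the (contragredient) action `h[·]` of `H` on `Σ ≅ ℝ²`
    (B = (!![t, t ^ γ * ℓ; 0, t ^ γ]ᵀ)⁻¹) ∧
    -- the intertwining `Φ(hx) = h[Φ(x)]`
    (∀ x : Fin 2 → ℝ, Φ (M.mulVec x) = B.mulVec (Φ x)) ∧
    -- `JΦ(x₁,x₂) = x₁²/2`
    (∀ x : Fin 2 → ℝ,
      |Matrix.det !![-(x 0), 0; -(x 1) / 2, -(x 0) / 2]| = (x 0) ^ 2 / 2) ∧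
    -- `β(ℓ,t) = t^{-γ}` and `α(ℓ,t) = t^{1+γ}`
    (|M.det| = t ^ (-γ)) ∧ (|B.det|⁻¹ = t ^ ((1 : ℝ) + γ)) := by
  have hr : ∀ a b : ℝ, t ^ a * t ^ b = t ^ (a + b) := fun a b => (rpow_add ht a b).symm
  set e := t ^ (-(1:ℝ)/2) with he
  set f := t ^ ((1:ℝ)/2 - γ) with hf
  set c := t ^ ((1:ℝ)/2) with hc
  set d := t ^ (γ - (1:ℝ)/2) with hd
  set g := t ^ γ with hg
  set g' := t ^ (-γ) with hg'
  have hec : e * c = 1 := by rw [he, hc, hr]; norm_num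
  have hfd : f * d = 1 := by rw [hf, hd, hr]; norm_num
  have hcc : t = c * c := by rw [hc, hr]; norm_num [rpow_one]
  have hcd : g = c * d := by rw [hc, hd, hg, hr]; ring_nf
  have hef : e * f = g' := by rw [he, hf, hg', hr]; ring_nf
  have hee : e * e = t⁻¹ := by rw [he, hr]; norm_num [rpow_neg_one]
  have hgg : g * g' = 1 := by rw [hg, hg', hr]; norm_num
  have htg : (0:ℝ) < g := rpow_pos_of_pos ht γ
  have htng : (0:ℝ) < g' := rpow_pos_of_pos ht (-γ)
  have hMeq : M = !![e, 0; -ℓ * e, f] := by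
    rw [hM, Matrix.mul_fin_two]; norm_num
  have hMinv : M⁻¹ = !![c, 0; ℓ * d, d] := by
    apply Matrix.inv_eq_right_inv
    rw [hMeq, Matrix.mul_fin_two, Matrix.one_fin_two]
    ext i j
    fin_cases i <;> fin_cases j <;> simp
    · linear_combination hec
    · linear_combination (-ℓ) * hec + ℓ * hfd
    · linear_combination hfd
  refine ⟨?_, ?_, ?_, ?_, ?_, ?_⟩
  · intro a₁ a₂
    rw [hMinv, tr2, Matrix.mul_fin_two, Matrix.mul_fin_two]
    ext i j
    fin_cases i <;> fin_cases j <;> simp [hcc, hcd] <;> ring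
  · symm
    apply Matrix.inv_eq_right_inv
    rw [hB, tr2, Matrix.mul_fin_two, Matrix.one_fin_two]
    have h1 : t * t⁻¹ = 1 := mul_inv_cancel₀ ht.ne'
    ext i j
    fin_cases i <;> fin_cases j <;> simp
    · linear_combination h1
    · ring
    · linear_combination hgg
  · intro x
    rw [hΦ, hΦ, hB, hMeq]
    funext i
    fin_cases i <;>
      simp [Matrix.mulVec, dotProduct, Fin.sum_univ_two, ← hee, ← hef] <;>
      ring
  · intro x
    rw [Matrix.det_fin_two_of]
    rw [show -x 0 * (-x 0 / 2) - 0 * (-x 1 / 2) = x 0 ^ 2 / 2 by ring]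
    exact abs_of_nonneg (by positivity)
  · rw [hMeq, Matrix.det_fin_two_of]
    rw [show e * f - 0 * (-ℓ * e) = g' by rw [zero_mul, sub_zero, hef]]
    exact abs_of_nonneg htng.le
  · rw [hB, Matrix.det_fin_two_of]
    rw [show t⁻¹ * g' - 0 * (-ℓ * t⁻¹) = t⁻¹ * g' by ring]
    rw [abs_of_nonneg (by positivity), mul_inv, inv_inv, hg', ← rpow_neg ht.le, neg_neg,
      rpow_add ht, rpow_one]
end

section
/- Disintegration extends from C_c to L¹: let X, Y be locally compact second countable spaces, ω a Radon measure on X, ρ a Radon measure on Y, Ψ : X → Y an ω-measurable map, and {ω_y}_{y∈Y} a family of Radon measures on X with ω_y concentrated on Ψ⁻¹(y) and ∫_X φ dω = ∫_Y (∫_X φ dω_y) dρ(y) for all φ ∈ C_c(X). Then every ω-integrable f : X → ℂ is ω_y-integrable for ρ-almost every y, the function y ↦ ∫_X f dω_y is ρ-integrable, and ∫_X f dω = ∫_Y (∫_X f dω_y) dρ(y). Moreover the family {ω_y} is unique up to ρ-null modification. -/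
/-!
For nonnegative `φ ∈ C_c(X)` the hypothesis reads `∫⁻ φ dω = ∫⁻ (∫⁻ φ dω_y) dρ(y)`. Monotone
convergence carries this to indicators of open sets (increasing limits of such `φ`), a π-λ
argument on open pieces of finite measure carries it to all Borel sets, and the usual induction
to all measurable `g ≥ 0`. In particular an `ω`-null set is `ω_y`-null for `ρ`-a.e. `y`, so
nothing changes when `f ∈ L¹(ω)` is modified on an `ω`-null set, and splitting `f` into real and
imaginary, positive and negative parts gives the `L¹` statement.

For uniqueness, concentration on the fibres gives `∫_S ω_y(A) dρ(y) = ω(A ∩ Ψ⁻¹ S)` for every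
Borel `S ⊆ Y`, so `ω_y(A) = ω'_y(A)` for `ρ`-a.e. `y`, for each Borel `A ⊆ X`. Only countably
many `A` are needed to pin down a measure finite on compacts: a countable π-system generating
the Borel sets, cut down by a compact exhaustion.
-/

open MeasureTheory Set Filter
open scoped ENNReal

theorem MeasurableSpace.exists_countable_isPiSystem_eq_generateFrom {X : Type*}
    [m : MeasurableSpace X] [MeasurableSpace.CountablyGenerated X] :
    ∃ C : Set (Set X), C.Countable ∧ IsPiSystem C ∧ m = generateFrom C := by
  obtain ⟨b, hbc, rfl⟩ := CountablyGenerated.isCountablyGenerated (α := X)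
  refine ⟨(fun F => ⋂₀ F) '' {F | F.Finite ∧ F ⊆ b},
    (countable_ofPred_finite_subset hbc).image _, ?_, le_antisymm (generateFrom_mono ?_) ?_⟩
  · rintro _ ⟨F, ⟨hF, hFb⟩, rfl⟩ _ ⟨G, ⟨hG, hGb⟩, rfl⟩ -
    exact ⟨F ∪ G, ⟨hF.union hG, union_subset hFb hGb⟩, sInter_union F G⟩
  · exact fun s hs => ⟨{s}, ⟨finite_singleton s, singleton_subset_iff.2 hs⟩, sInter_singleton s⟩
  · refine generateFrom_le ?_
    rintro _ ⟨F, ⟨hF, hFb⟩, rfl⟩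
    exact .sInter hF.countable fun s hs => measurableSet_generateFrom (hFb hs)

theorem measure_inter_preimage_of_ae_eq_const {X Y : Type*} [MeasurableSpace X] {ν : Measure X}
    {Φ : X → Y} {y : Y} (h : ∀ᵐ x ∂ν, Φ x = y) (A : Set X) (S : Set Y) :
    ν (A ∩ Φ ⁻¹' S) = S.indicator (fun _ => ν A) y := by
  by_cases hy : y ∈ S
  · rw [indicator_of_mem hy]
    exact measure_congr (eventuallyEq_set.2 (h.mono fun x hx => by simp [hx, hy]))
  · rw [indicator_of_notMem hy, ← measure_empty (μ := ν)]
    exact measure_congr (eventuallyEq_set.2 (h.mono fun x hx => by simp [hx, hy]))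

section Disintegration

variable {X Y : Type*} [MeasurableSpace X] [MeasurableSpace Y]
  {μ : Measure X} {ρ : Measure Y} {κ : Y → Measure X}

/-- The family `κ` is not assumed to be a kernel, so the a.e.-measurability of `y ↦ κ y s` is
recorded alongside the identity. -/
def DisintegratesSet (μ : Measure X) (ρ : Measure Y) (κ : Y → Measure X) (s : Set X) : Prop :=
  AEMeasurable (fun y => κ y s) ρ ∧ μ s = ∫⁻ y, κ y s ∂ρ

def DisintegratesLIntegral (μ : Measure X) (ρ : Measure Y) (κ : Y → Measure X)
    (g : X → ℝ≥0∞) : Prop :=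
  AEMeasurable (fun y => ∫⁻ x, g x ∂κ y) ρ ∧ ∫⁻ x, g x ∂μ = ∫⁻ y, ∫⁻ x, g x ∂κ y ∂ρ

def IsDisintegration (μ : Measure X) (ρ : Measure Y) (κ : Y → Measure X) : Prop :=
  ∀ s, MeasurableSet s → DisintegratesSet μ ρ κ s

namespace DisintegratesSet

theorem empty : DisintegratesSet μ ρ κ ∅ := by
  simp [DisintegratesSet, aemeasurable_const]

theorem sdiff {s t : Set X} (ht : DisintegratesSet μ ρ κ t) (hs : DisintegratesSet μ ρ κ s)
    (hst : s ⊆ t) (hs_meas : MeasurableSet s) (hμs : μ s ≠ ∞) :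
    DisintegratesSet μ ρ κ (t \ s) := by
  have hfin : ∫⁻ y, κ y s ∂ρ ≠ ∞ := hs.2 ▸ hμs
  have hκ : ∀ᵐ y ∂ρ, κ y (t \ s) = κ y t - κ y s := by
    filter_upwards [ae_lt_top' hs.1 hfin] with y hy
    exact measure_sdiff hst hs_meas.nullMeasurableSet hy.ne
  refine ⟨(ht.1.sub hs.1).congr (hκ.mono fun y hy => hy.symm), ?_⟩
  rw [measure_sdiff hst hs_meas.nullMeasurableSet hμs, ht.2, hs.2, lintegral_congr_ae hκ,
    lintegral_sub' hs.1 hfin (ae_of_all _ fun y => measure_mono hst)]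

theorem iUnion {s : ℕ → Set X} (h : ∀ n, DisintegratesSet μ ρ κ (s n))
    (hs : ∀ n, MeasurableSet (s n)) (hd : Pairwise (Function.onFun Disjoint s)) :
    DisintegratesSet μ ρ κ (⋃ n, s n) := by
  simp only [DisintegratesSet, measure_iUnion hd hs]
  exact ⟨AEMeasurable.tsum fun n => (h n).1,
    by rw [lintegral_tsum fun n => (h n).1]; exact tsum_congr fun n => (h n).2⟩

theorem iUnion_of_monotone {s : ℕ → Set X} (h : ∀ n, DisintegratesSet μ ρ κ (s n))
    (hs : Monotone s) : DisintegratesSet μ ρ κ (⋃ n, s n) := by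
  simp only [DisintegratesSet, hs.measure_iUnion]
  refine ⟨AEMeasurable.iSup fun n => (h n).1, ?_⟩
  rw [lintegral_iSup' (fun n => (h n).1) (ae_of_all _ fun y m n hmn => measure_mono (hs hmn))]
  exact iSup_congr fun n => (h n).2

theorem indicator_const {s : Set X} (h : DisintegratesSet μ ρ κ s)
    (hs : MeasurableSet s) (c : ℝ≥0∞) :
    DisintegratesLIntegral μ ρ κ (s.indicator fun _ => c) := by
  simp only [DisintegratesLIntegral, lintegral_indicator_const hs]
  exact ⟨h.1.const_mul c, by rw [h.2, lintegral_const_mul'' c h.1]⟩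

end DisintegratesSet

namespace DisintegratesLIntegral

theorem add {f g : X → ℝ≥0∞} (hf : DisintegratesLIntegral μ ρ κ f)
    (hg : DisintegratesLIntegral μ ρ κ g) (hfm : Measurable f) :
    DisintegratesLIntegral μ ρ κ (f + g) := by
  simp only [DisintegratesLIntegral, Pi.add_apply, lintegral_add_left hfm]
  exact ⟨hf.1.add hg.1, by rw [hf.2, hg.2, lintegral_add_left' hf.1]⟩

theorem iSup {f : ℕ → X → ℝ≥0∞} (h : ∀ n, DisintegratesLIntegral μ ρ κ (f n))
    (hfm : ∀ n, Measurable (f n)) (hf : Monotone f) :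
    DisintegratesLIntegral μ ρ κ fun x => ⨆ n, f n x := by
  simp only [DisintegratesLIntegral, lintegral_iSup hfm hf]
  refine ⟨AEMeasurable.iSup fun n => (h n).1, ?_⟩
  rw [lintegral_iSup' (fun n => (h n).1) (ae_of_all _ fun y m n hmn => lintegral_mono (hf hmn))]
  exact iSup_congr fun n => (h n).2

theorem disintegratesSet {s : Set X}
    (h : DisintegratesLIntegral μ ρ κ (s.indicator 1)) (hs : MeasurableSet s) :
    DisintegratesSet μ ρ κ s := by
  simpa only [DisintegratesSet, DisintegratesLIntegral, lintegral_indicator_one hs] using h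

theorem integrable_toReal {g : X → ℝ≥0∞} (h : DisintegratesLIntegral μ ρ κ g)
    (hg : ∫⁻ x, g x ∂μ ≠ ∞) :
    Integrable (fun y => (∫⁻ x, g x ∂κ y).toReal) ρ :=
  integrable_toReal_of_lintegral_ne_top h.1 (h.2 ▸ hg)

theorem integral_toReal {g : X → ℝ≥0∞} (h : DisintegratesLIntegral μ ρ κ g)
    (hg : ∫⁻ x, g x ∂μ ≠ ∞) :
    ∫ y, (∫⁻ x, g x ∂κ y).toReal ∂ρ = (∫⁻ x, g x ∂μ).toReal := by
  rw [MeasureTheory.integral_toReal h.1 (ae_lt_top' h.1 (h.2 ▸ hg)), h.2]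

end DisintegratesLIntegral

namespace IsDisintegration

theorem of_generateFrom {C : Set (Set X)}
    (hgen : ‹MeasurableSpace X› = MeasurableSpace.generateFrom C) (hC : IsPiSystem C)
    {B : ℕ → Set X} (hBC : ∀ n, B n ∈ C) (hB : Monotone B) (hBU : ⋃ n, B n = univ)
    (hμB : ∀ n, μ (B n) ≠ ∞) (h : ∀ s ∈ C, DisintegratesSet μ ρ κ s) :
    IsDisintegration μ ρ κ := by
  have hBm : ∀ n, MeasurableSet (B n) := fun n => hgen ▸ .basic _ (hBC n)
  -- the complement step of the π-λ argument needs finite measure, hence the pieces `B n`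
  have hpiece : ∀ n s, MeasurableSet s → DisintegratesSet μ ρ κ (s ∩ B n) := by
    intro n s hs
    induction s, hs using MeasurableSpace.induction_on_inter hgen hC with
    | empty => simpa using DisintegratesSet.empty
    | basic s hs =>
      rcases (s ∩ B n).eq_empty_or_nonempty with he | hne
      · exact he ▸ .empty
      · exact h _ (hC _ hs _ (hBC n) hne)
    | compl s hs ih =>
      rw [show sᶜ ∩ B n = B n \ (s ∩ B n) by ext; simp [and_comm]]
      exact (h _ (hBC n)).sdiff ih inter_subset_right (hs.inter (hBm n))
        (ne_top_of_le_ne_top (hμB n) (measure_mono inter_subset_right))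
    | iUnion f hd hf ih =>
      rw [iUnion_inter]
      exact .iUnion ih (fun i => (hf i).inter (hBm n))
        fun i j hij => (hd hij).mono inter_subset_left inter_subset_left
  intro s hs
  rw [← inter_univ s, ← hBU, inter_iUnion]
  exact .iUnion_of_monotone (fun n => hpiece n s hs) fun m n h => inter_subset_inter_right _ (hB h)

theorem disintegratesLIntegral_of_measurable (hκ : IsDisintegration μ ρ κ) {g : X → ℝ≥0∞}
    (hg : Measurable g) : DisintegratesLIntegral μ ρ κ g := by
  refine Measurable.ennreal_induction (motive := DisintegratesLIntegral μ ρ κ)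
    (fun c s hs => (hκ s hs).indicator_const hs c) (fun f g _ hfm _ hf hg => hf.add hg hfm)
    (fun f hfm hf h => .iSup h hfm hf) hg

theorem ae_ae_of_ae (hκ : IsDisintegration μ ρ κ) {p : X → Prop} (h : ∀ᵐ x ∂μ, p x) :
    ∀ᵐ y ∂ρ, ∀ᵐ x ∂κ y, p x := by
  obtain ⟨N, hpN, hN, hμN⟩ := exists_measurable_superset_of_null (ae_iff.1 h)
  have hκN : ∀ᵐ y ∂ρ, κ y N = 0 :=
    (lintegral_eq_zero_iff' (hκ N hN).1).1 ((hκ N hN).2.symm.trans hμN)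
  filter_upwards [hκN] with y hy using measure_mono_null hpN hy

theorem disintegratesLIntegral (hκ : IsDisintegration μ ρ κ) {g : X → ℝ≥0∞}
    (hg : AEMeasurable g μ) : DisintegratesLIntegral μ ρ κ g := by
  have h := hκ.disintegratesLIntegral_of_measurable hg.measurable_mk
  have hae : ∀ᵐ y ∂ρ, ∫⁻ x, g x ∂κ y = ∫⁻ x, hg.mk g x ∂κ y :=
    (hκ.ae_ae_of_ae hg.ae_eq_mk).mono fun y hy => lintegral_congr_ae hy
  exact ⟨h.1.congr (hae.mono fun _ hy => hy.symm),
    by rw [lintegral_congr_ae hg.ae_eq_mk, h.2, lintegral_congr_ae hae]⟩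

theorem ae_integrable {E : Type*} [NormedAddCommGroup E] (hκ : IsDisintegration μ ρ κ)
    {f : X → E} (hf : Integrable f μ) : ∀ᵐ y ∂ρ, Integrable f (κ y) := by
  have h := hκ.disintegratesLIntegral hf.1.enorm
  have hfin : ∫⁻ y, ∫⁻ x, ‖f x‖ₑ ∂κ y ∂ρ ≠ ∞ := h.2 ▸ hf.2.ne
  filter_upwards [ae_lt_top' h.1 hfin, hκ.ae_ae_of_ae hf.1.ae_eq_mk] with y hy hmk
  exact ⟨hf.1.stronglyMeasurable_mk.aestronglyMeasurable.congr (EventuallyEq.symm hmk), hy⟩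

theorem integrable_integral_real_and_integral_eq (hκ : IsDisintegration μ ρ κ) {f : X → ℝ}
    (hf : Integrable f μ) :
    Integrable (fun y => ∫ x, f x ∂κ y) ρ ∧ ∫ x, f x ∂μ = ∫ y, ∫ x, f x ∂κ y ∂ρ := by
  have hpos := hκ.disintegratesLIntegral hf.1.aemeasurable.ennreal_ofReal
  have hneg : DisintegratesLIntegral μ ρ κ fun x => ENNReal.ofReal (-f x) :=
    hκ.disintegratesLIntegral hf.neg.1.aemeasurable.ennreal_ofReal
  have hpos_int := hpos.integrable_toReal hf.lintegral_lt_top.ne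
  have hneg_int := hneg.integrable_toReal hf.neg.lintegral_lt_top.ne
  have hsplit : ∀ᵐ y ∂ρ, ∫ x, f x ∂κ y = (∫⁻ x, ENNReal.ofReal (f x) ∂κ y).toReal -
      (∫⁻ x, ENNReal.ofReal (-f x) ∂κ y).toReal := by
    filter_upwards [hκ.ae_integrable hf] with y hy
      using integral_eq_lintegral_pos_part_sub_lintegral_neg_part hy
  refine ⟨(hpos_int.sub hneg_int).congr (hsplit.mono fun _ hy => hy.symm), ?_⟩
  rw [integral_congr_ae hsplit, integral_sub hpos_int hneg_int,
    hpos.integral_toReal hf.lintegral_lt_top.ne, hneg.integral_toReal hf.neg.lintegral_lt_top.ne,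
    integral_eq_lintegral_pos_part_sub_lintegral_neg_part hf]

theorem integrable_integral {𝕜 : Type*} [RCLike 𝕜] (hκ : IsDisintegration μ ρ κ)
    {f : X → 𝕜} (hf : Integrable f μ) :
    Integrable (fun y => ∫ x, f x ∂κ y) ρ := by
  refine Integrable.re_im_iff.1
    ⟨(hκ.integrable_integral_real_and_integral_eq hf.re).1.congr ?_,
      (hκ.integrable_integral_real_and_integral_eq hf.im).1.congr ?_⟩ <;>
    filter_upwards [hκ.ae_integrable hf] with y hy
  exacts [integral_re hy, integral_im hy]

theorem integral_eq {𝕜 : Type*} [RCLike 𝕜] (hκ : IsDisintegration μ ρ κ)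
    {f : X → 𝕜} (hf : Integrable f μ) :
    ∫ x, f x ∂μ = ∫ y, ∫ x, f x ∂κ y ∂ρ := by
  have hF := hκ.integrable_integral hf
  apply RCLike.ext
  · rw [← integral_re hf, ← integral_re hF, (hκ.integrable_integral_real_and_integral_eq hf.re).2]
    exact integral_congr_ae ((hκ.ae_integrable hf).mono fun y hy => integral_re hy)
  · rw [← integral_im hf, ← integral_im hF, (hκ.integrable_integral_real_and_integral_eq hf.im).2]
    exact integral_congr_ae ((hκ.ae_integrable hf).mono fun y hy => integral_im hy)

theorem setLIntegral_eq_measure_inter_preimage {Ψ : X → Y} (hκ : IsDisintegration μ ρ κ)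
    (hΨ : AEMeasurable Ψ μ) (hκΨ : ∀ y, κ y (Ψ ⁻¹' {y})ᶜ = 0) {A : Set X} (hA : MeasurableSet A)
    {S : Set Y} (hS : MeasurableSet S) :
    ∫⁻ y in S, κ y A ∂ρ = μ (A ∩ hΨ.mk Ψ ⁻¹' S) := by
  have hfibre : ∀ᵐ y ∂ρ, κ y (A ∩ hΨ.mk Ψ ⁻¹' S) = S.indicator (fun y => κ y A) y := by
    filter_upwards [hκ.ae_ae_of_ae hΨ.ae_eq_mk] with y hy
    refine measure_inter_preimage_of_ae_eq_const ?_ A S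
    filter_upwards [hy, ae_iff (p := fun x => Ψ x = y) |>.2 (hκΨ y)] with x hx hxy
    exact hx ▸ hxy
  rw [← lintegral_indicator hS, (hκ _ (hA.inter (hΨ.measurable_mk hS))).2]
  exact (lintegral_congr_ae hfibre).symm

theorem ae_apply_eq [SigmaFinite ρ] {κ' : Y → Measure X} {Ψ : X → Y}
    (hκ : IsDisintegration μ ρ κ) (hκ' : IsDisintegration μ ρ κ') (hΨ : AEMeasurable Ψ μ)
    (hκΨ : ∀ y, κ y (Ψ ⁻¹' {y})ᶜ = 0) (hκ'Ψ : ∀ y, κ' y (Ψ ⁻¹' {y})ᶜ = 0) {A : Set X}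
    (hA : MeasurableSet A) :
    ∀ᵐ y ∂ρ, κ' y A = κ y A :=
  ae_eq_of_forall_setLIntegral_eq_of_sigmaFinite₀ (hκ' A hA).1 (hκ A hA).1 fun S hS _ => by
    rw [hκ'.setLIntegral_eq_measure_inter_preimage hΨ hκ'Ψ hA hS,
      hκ.setLIntegral_eq_measure_inter_preimage hΨ hκΨ hA hS]

end IsDisintegration

theorem ae_eq_of_forall_ae_apply_eq [MeasurableSpace.CountablyGenerated X]
    {κ' : Y → Measure X} {K : ℕ → Set X} (hKm : ∀ n, MeasurableSet (K n))
    (hKU : ⋃ n, K n = univ) (hκK : ∀ y n, κ y (K n) ≠ ∞)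
    (h : ∀ s, MeasurableSet s → ∀ᵐ y ∂ρ, κ' y s = κ y s) : ∀ᵐ y ∂ρ, κ' y = κ y := by
  obtain ⟨C, hCc, hC, hgen⟩ := MeasurableSpace.exists_countable_isPiSystem_eq_generateFrom (X := X)
  have hCm : ∀ s ∈ C, MeasurableSet s := fun s hs => hgen ▸ .basic s hs
  have hCK : ∀ᵐ y ∂ρ, ∀ n, ∀ s ∈ C, κ' y (s ∩ K n) = κ y (s ∩ K n) :=
    ae_all_iff.2 fun n => (ae_ball_iff hCc).2 fun s hs => h _ ((hCm s hs).inter (hKm n))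
  have hK : ∀ᵐ y ∂ρ, ∀ n, κ' y (K n) = κ y (K n) := ae_all_iff.2 fun n => h _ (hKm n)
  filter_upwards [hCK, hK] with y hCK hK
  refine (Measure.ext_of_generateFrom_of_cover hgen (countable_range K) hC (sUnion_range K ▸ hKU)
    ?_ ?_ ?_).symm
  · rintro _ ⟨n, rfl⟩
    exact hκK y n
  · rintro _ ⟨n, rfl⟩ s hs
    exact (hCK n s hs).symm
  · rintro _ ⟨n, rfl⟩
    exact (hK n).symm

end Disintegration

section Urysohn

variable {X : Type*} [TopologicalSpace X] [LocallyCompactSpace X] [SecondCountableTopology X]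
  [T2Space X]

theorem IsOpen.exists_hasCompactSupport_iSup_eq_indicator {V : Set X} (hV : IsOpen V) :
    ∃ ψ : ℕ → X → ℝ, Monotone ψ ∧
      (∀ n, Continuous (ψ n) ∧ HasCompactSupport (ψ n) ∧ 0 ≤ ψ n) ∧
      (fun x => ⨆ n, ENNReal.ofReal (ψ n x)) = V.indicator 1 := by
  have : LocallyCompactSpace V := hV.isOpenEmbedding_subtypeVal.locallyCompactSpace
  obtain ⟨K, hK, hKV⟩ : IsSigmaCompact V := isSigmaCompact_iff_sigmaCompactSpace.2 inferInstance
  have hKsub : ∀ n, K n ⊆ V := fun n => hKV ▸ subset_iUnion K n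
  choose φ hφ1 hφ0 hφc hφ01 using fun n => exists_continuous_one_zero_of_isCompact (hK n)
    hV.isClosed_compl (disjoint_compl_right_iff_subset.2 (hKsub n))
  -- Urysohn functions `φ n` for `K n ⊆ V`, made monotone by taking partial maxima
  set ψ := partialSups fun n => ⇑(φ n)
  have hψ : ∀ n x, ∃ j ≤ n, ψ n x = φ j x := fun n x => by
    rw [Pi.partialSups_apply]
    exact exists_partialSups_eq _ n
  have hψreg : ∀ n, Continuous (ψ n) ∧ HasCompactSupport (ψ n) := by
    intro n
    induction n with
    | zero => exact ⟨(φ 0).continuous, hφc 0⟩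
    | succ n ih =>
      rw [← Order.succ_eq_add_one, partialSups_succ]
      exact ⟨ih.1.sup (φ _).continuous, ih.2.sup (hφc _)⟩
  refine ⟨ψ, ψ.monotone, fun n => ⟨(hψreg n).1, (hψreg n).2, fun x => ?_⟩, funext fun x => ?_⟩
  · obtain ⟨j, -, hj⟩ := hψ n x
    exact hj ▸ (hφ01 j x).1
  by_cases hx : x ∈ V
  · obtain ⟨n, hn⟩ := mem_iUnion.1 (hKV ▸ hx)
    refine (indicator_of_mem hx (1 : X → ℝ≥0∞)).symm ▸ le_antisymm (iSup_le fun m => ?_) ?_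
    · obtain ⟨j, -, hj⟩ := hψ m x
      exact ENNReal.ofReal_le_one.2 (hj ▸ (hφ01 j x).2)
    · refine le_iSup_of_le n (ENNReal.one_le_ofReal.2 ?_)
      exact (hφ1 n hn).symm.le.trans (le_partialSups (fun n => ⇑(φ n)) n x)
  · rw [indicator_of_notMem hx]
    refine ENNReal.iSup_eq_zero.2 fun n => ?_
    obtain ⟨j, -, hj⟩ := hψ n x
    rw [hj, hφ0 j hx, Pi.zero_apply, ENNReal.ofReal_zero]

end Urysohn

section CompactlySupported

variable {X Y : Type*} [TopologicalSpace X] [MeasurableSpace X] [MeasurableSpace Y]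
  {μ : Measure X} {ρ : Measure Y} {κ : Y → Measure X}

def IsCcDisintegration (μ : Measure X) (ρ : Measure Y) (κ : Y → Measure X) : Prop :=
  ∀ φ : X → ℝ, Continuous φ → HasCompactSupport φ →
    Integrable (fun y => ∫ x, φ x ∂κ y) ρ ∧ ∫ x, φ x ∂μ = ∫ y, ∫ x, φ x ∂κ y ∂ρ

namespace IsCcDisintegration

variable [OpensMeasurableSpace X] [IsFiniteMeasureOnCompacts μ]
  [∀ y, IsFiniteMeasureOnCompacts (κ y)]

theorem disintegratesLIntegral_ofReal (h : IsCcDisintegration μ ρ κ) {φ : X → ℝ}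
    (hφ : Continuous φ) (hφc : HasCompactSupport φ) (hφ0 : 0 ≤ φ) :
    DisintegratesLIntegral μ ρ κ fun x => ENNReal.ofReal (φ x) := by
  have hofReal : ∀ (ν : Measure X) [IsFiniteMeasureOnCompacts ν],
      ∫⁻ x, ENNReal.ofReal (φ x) ∂ν = ENNReal.ofReal (∫ x, φ x ∂ν) := fun ν _ =>
    (ofReal_integral_eq_lintegral_ofReal (hφ.integrable_of_hasCompactSupport hφc)
      (ae_of_all _ hφ0)).symm
  obtain ⟨hint, heq⟩ := h φ hφ hφc
  simp only [DisintegratesLIntegral, hofReal]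
  refine ⟨ENNReal.measurable_ofReal.comp_aemeasurable hint.aemeasurable, ?_⟩
  rw [heq, ofReal_integral_eq_lintegral_ofReal hint (ae_of_all _ fun y => integral_nonneg hφ0)]

variable [LocallyCompactSpace X] [SecondCountableTopology X] [T2Space X]

theorem disintegratesSet_of_isOpen (h : IsCcDisintegration μ ρ κ) {V : Set X} (hV : IsOpen V) :
    DisintegratesSet μ ρ κ V := by
  obtain ⟨ψ, hψm, hψ, hψV⟩ := hV.exists_hasCompactSupport_iSup_eq_indicator
  refine DisintegratesLIntegral.disintegratesSet ?_ hV.measurableSet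
  rw [← hψV]
  exact .iSup (fun n => h.disintegratesLIntegral_ofReal (hψ n).1 (hψ n).2.1 (hψ n).2.2)
    (fun n => ENNReal.measurable_ofReal.comp (hψ n).1.measurable)
    fun m n hmn x => ENNReal.ofReal_le_ofReal (hψm hmn x)

theorem isDisintegration [BorelSpace X] (h : IsCcDisintegration μ ρ κ) :
    IsDisintegration μ ρ κ := by
  let K := CompactExhaustion.choice X
  refine .of_generateFrom BorelSpace.measurable_eq isPiSystem_isOpen
    (B := fun n => interior (K n)) (fun n => isOpen_interior)
    (fun m n hmn => interior_mono (K.subset hmn)) ?_ ?_ fun V hV => h.disintegratesSet_of_isOpen hV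
  · exact eq_univ_of_forall fun x => mem_iUnion.2 ⟨_, K.subset_interior_succ _ (K.mem_find x)⟩
  · exact fun n => ((measure_mono interior_subset).trans_lt (K.isCompact n).measure_lt_top).ne

end IsCcDisintegration

end CompactlySupported

theorem stmt_17_general
    {X Y : Type*}
    [TopologicalSpace X] [LocallyCompactSpace X] [SecondCountableTopology X] [T2Space X]
    [MeasurableSpace X] [BorelSpace X]
    [TopologicalSpace Y] [LocallyCompactSpace Y] [SecondCountableTopology Y]
    [MeasurableSpace Y]
    (ω : Measure X) [IsFiniteMeasureOnCompacts ω]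
    (ρ : Measure Y) [IsFiniteMeasureOnCompacts ρ]
    (Ψ : X → Y) (hΨ : AEMeasurable Ψ ω)
    (ωy : Y → Measure X)
    [∀ y, IsFiniteMeasureOnCompacts (ωy y)]
    (hconc : ∀ y, ωy y ((Ψ ⁻¹' {y})ᶜ) = 0)
    (hdis : ∀ φ : X → ℝ, Continuous φ → HasCompactSupport φ →
      Integrable (fun y => ∫ x, φ x ∂(ωy y)) ρ ∧
      ∫ x, φ x ∂ω = ∫ y, (∫ x, φ x ∂(ωy y)) ∂ρ) :
    -- the disintegration extends to all `ω`-integrable functions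
    (∀ f : X → ℂ, Integrable f ω →
      (∀ᵐ y ∂ρ, Integrable f (ωy y)) ∧
      Integrable (fun y => ∫ x, f x ∂(ωy y)) ρ ∧
      ∫ x, f x ∂ω = ∫ y, (∫ x, f x ∂(ωy y)) ∂ρ) ∧
    -- uniqueness of the disintegrating family up to a `ρ`-null set
    (∀ ωy' : Y → Measure X, (∀ y, IsFiniteMeasureOnCompacts (ωy' y)) →
      (∀ y, ωy' y ((Ψ ⁻¹' {y})ᶜ) = 0) →
      (∀ φ : X → ℝ, Continuous φ → HasCompactSupport φ →
        Integrable (fun y => ∫ x, φ x ∂(ωy' y)) ρ ∧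
        ∫ x, φ x ∂ω = ∫ y, (∫ x, φ x ∂(ωy' y)) ∂ρ) →
      ∀ᵐ y ∂ρ, ωy' y = ωy y) := by
  have hω : IsDisintegration ω ρ ωy := IsCcDisintegration.isDisintegration hdis
  refine ⟨fun f hf => ⟨hω.ae_integrable hf, hω.integrable_integral hf, hω.integral_eq hf⟩, ?_⟩
  intro ωy' hωy' hconc' hdis'
  have hω' : IsDisintegration ω ρ ωy' := IsCcDisintegration.isDisintegration hdis'
  let K := CompactExhaustion.choice X
  exact ae_eq_of_forall_ae_apply_eq (fun n => (K.isCompact n).measurableSet) K.iUnion_eq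
    (fun y n => (K.isCompact n).measure_ne_top)
    fun A hA => hω.ae_apply_eq hω' hΨ hconc hconc' hA

/-- **disintegration extends from `C_c` to `L¹`.** Let `X`, `Y` be locally
compact second countable (Hausdorff) spaces, `ω` a Radon measure on `X`, `ρ` a Radon
measure on `Y`, `Ψ : X → Y` an `ω`-measurable map, and `{ω_y}` a family of Radon measures
on `X` with `ω_y` concentrated on `Ψ⁻¹(y)` and `∫ φ dω = ∫_Y (∫ φ dω_y) dρ(y)` for all
`φ ∈ C_c(X)`. Then every `ω`-integrable `f : X → ℂ` is `ω_y`-integrable for `ρ`-a.e. `y`,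
`y ↦ ∫ f dω_y` is `ρ`-integrable, and `∫ f dω = ∫_Y (∫ f dω_y) dρ(y)`; moreover the
family `{ω_y}` is unique up to modification on a `ρ`-null set. -/
theorem stmt_17
    {X Y : Type*}
    [TopologicalSpace X] [LocallyCompactSpace X] [SecondCountableTopology X] [T2Space X]
    [MeasurableSpace X] [BorelSpace X]
    [TopologicalSpace Y] [LocallyCompactSpace Y] [SecondCountableTopology Y] [T2Space Y]
    [MeasurableSpace Y] [BorelSpace Y]
    (ω : Measure X) [IsFiniteMeasureOnCompacts ω]
    (ρ : Measure Y) [IsFiniteMeasureOnCompacts ρ]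
    (Ψ : X → Y) (hΨ : AEMeasurable Ψ ω)
    (ωy : Y → Measure X)
    [∀ y, IsFiniteMeasureOnCompacts (ωy y)]
    (hconc : ∀ y, ωy y ((Ψ ⁻¹' {y})ᶜ) = 0)
    (hdis : ∀ φ : X → ℝ, Continuous φ → HasCompactSupport φ →
      Integrable (fun y => ∫ x, φ x ∂(ωy y)) ρ ∧
      ∫ x, φ x ∂ω = ∫ y, (∫ x, φ x ∂(ωy y)) ∂ρ) :
    -- the disintegration extends to all `ω`-integrable functions
    (∀ f : X → ℂ, Integrable f ω →
      (∀ᵐ y ∂ρ, Integrable f (ωy y)) ∧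
      Integrable (fun y => ∫ x, f x ∂(ωy y)) ρ ∧
      ∫ x, f x ∂ω = ∫ y, (∫ x, f x ∂(ωy y)) ∂ρ) ∧
    -- uniqueness of the disintegrating family up to a `ρ`-null set
    (∀ ωy' : Y → Measure X, (∀ y, IsFiniteMeasureOnCompacts (ωy' y)) →
      (∀ y, ωy' y ((Ψ ⁻¹' {y})ᶜ) = 0) →
      (∀ φ : X → ℝ, Continuous φ → HasCompactSupport φ →
        Integrable (fun y => ∫ x, φ x ∂(ωy' y)) ρ ∧
        ∫ x, φ x ∂ω = ∫ y, (∫ x, φ x ∂(ωy' y)) ∂ρ) →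
      ∀ᵐ y ∂ρ, ωy' y = ωy y) :=
  stmt_17_general ω ρ Ψ hΨ ωy hconc hdis
end
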